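/- Let M be an SCM over V with induced ADMG G, and let C be a partition of V whose quotient G_C is acyclic. Assume M's interventional distributions satisfy the three rules of do-calculus with respect to G. Then for any disjoint sets of clusters X, Y, Z, W, Rule 1 of do-calculus holds at the cluster level: if Y is d-separated from Z given X ∪ W in the mutilated C-DAG (G_C) with all edges into X removed, then P(y | do(x), z, w) = P(y | do(x), w). -/
import Mathlib


/-- An acyclic directed mixed graph skeleton: a directed edge relation
together with a symmetric bidirected edge relation. -/
structure MixedGraph (V : Type) where
  dir : V → V → Prop
  bi : V → V → Prop
  bi_symm : ∀ a b, bi a b → bi b a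

namespace MixedGraph

variable {V : Type} {I : Type}

/-- Adjacency: a directed edge in either orientation or a bidirected edge. -/
def Adj (G : MixedGraph V) (a b : V) : Prop :=
  G.dir a b ∨ G.dir b a ∨ G.bi a b

/-- Acyclicity of the directed part. -/
def Acyclic (G : MixedGraph V) : Prop :=
  ∀ a, ¬ Relation.TransGen G.dir a a

/-- The quotient (cluster) graph of `G` by the partition given by the fibers of `π`. -/
def quot (G : MixedGraph V) (π : V → I) : MixedGraph I where
  dir i j := i ≠ j ∧ ∃ a b, π a = i ∧ π b = j ∧ G.dir a b
  bi i j := i ≠ j ∧ ∃ a b, π a = i ∧ π b = j ∧ G.bi a b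
  bi_symm := by
    rintro i j ⟨hne, a, b, ha, hb, h⟩
    exact ⟨hne.symm, b, a, hb, ha, G.bi_symm a b h⟩

/-- The mutilated graph: delete all edges with an arrowhead into `X`
and all directed edges out of `Z`. -/
def mutil (G : MixedGraph V) (X Z : Set V) : MixedGraph V where
  dir a b := G.dir a b ∧ b ∉ X ∧ a ∉ Z
  bi a b := G.bi a b ∧ a ∉ X ∧ b ∉ X
  bi_symm := by
    rintro a b ⟨h, ha, hb⟩
    exact ⟨G.bi_symm a b h, hb, ha⟩

/-- Type of an edge as traversed along a walk. -/
inductive EType : Type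
  | fwd   -- a → b
  | bwd   -- a ← b
  | bidir -- a ↔ b
deriving DecidableEq

/-- The step relation of a walk. -/
def step (G : MixedGraph V) (a : V) (e : EType) (b : V) : Prop :=
  match e with
  | .fwd => G.dir a b
  | .bwd => G.dir b a
  | .bidir => G.bi a b

/-- A walk starting at a vertex, given by a list of (edge type, next vertex). -/
def IsWalk (G : MixedGraph V) : V → List (EType × V) → Prop
  | _, [] => True
  | a, (e, b) :: rest => G.step a e b ∧ IsWalk G b rest

/-- The final vertex of a walk. -/
def walkEnd : V → List (EType × V) → V
  | a, [] => a
  | _, (_, b) :: rest => walkEnd b rest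

/-- `b` is a descendant of `a` (along directed edges, reflexively). -/
def Desc (G : MixedGraph V) : V → V → Prop :=
  Relation.ReflTransGen G.dir

/-- Whether an interior vertex between two consecutive steps is a collider:
an arrowhead on both sides. -/
def colliderAt (e₁ e₂ : EType) : Prop :=
  (e₁ = EType.fwd ∨ e₁ = EType.bidir) ∧ (e₂ = EType.bwd ∨ e₂ = EType.bidir)

/-- A walk is active (d-connecting) given a conditioning set `S`:
every interior non-collider lies outside `S` and every interior collider
is in `S` or has a descendant in `S`. -/
def Active (G : MixedGraph V) (S : Set V) : List (EType × V) → Prop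
  | [] => True
  | [_] => True
  | (e₁, b) :: (e₂, c) :: rest =>
      ((colliderAt e₁ e₂ ∧ ∃ d ∈ S, G.Desc b d) ∨ (¬ colliderAt e₁ e₂ ∧ b ∉ S))
      ∧ Active G S ((e₂, c) :: rest)

/-- The walk contains an (interior) collider belonging to `T`. -/
def HasColliderIn (G : MixedGraph V) (T : Set V) : List (EType × V) → Prop
  | (e₁, b) :: (e₂, c) :: rest =>
      (colliderAt e₁ e₂ ∧ b ∈ T) ∨ HasColliderIn G T ((e₂, c) :: rest)
  | _ => False

/-- `X` and `Y` are d-connected given `S`: some active walk joins them. -/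
def DConn (G : MixedGraph V) (S X Y : Set V) : Prop :=
  ∃ x ∈ X, ∃ w : List (EType × V),
    w ≠ [] ∧ G.IsWalk x w ∧ walkEnd x w ∈ Y ∧ G.Active S w

/-- d-separation: no active walk between `X` and `Y` given `S`. -/
def DSep (G : MixedGraph V) (S X Y : Set V) : Prop :=
  ¬ G.DConn S X Y

end MixedGraph

open scoped Classical

/-- The marginal of a (sub)distribution `Pd` on the event that the coordinates
in `S` agree with `v`. -/
noncomputable def marg {V : Type} [Fintype V] {val : V → Type}
    [∀ i, Fintype (val i)]
    (Pd : (∀ i, val i) → ℝ) (S : Set V) (v : ∀ i, val i) : ℝ :=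
  ∑ w : ∀ i, val i, if ∀ i ∈ S, w i = v i then Pd w else 0

/-- Four pairwise disjoint sets. -/
def PairwiseDisj4 {α : Type} (A B C D : Set α) : Prop :=
  Disjoint A B ∧ Disjoint A C ∧ Disjoint A D ∧
  Disjoint B C ∧ Disjoint B D ∧ Disjoint C D

namespace MixedGraph

variable {V : Type} {I : Type}

/-- Projection of a walk to the quotient, collapsing intra-cluster steps. -/
noncomputable def projw (π : V → I) : I → List (EType × V) → List (EType × I)
  | _, [] => []
  | i, (e, b) :: rest =>
      if π b = i then projw π i rest else (e, π b) :: projw π (π b) rest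

lemma active_tail {G : MixedGraph V} {S : Set V} :
    ∀ {p : EType × V} {w}, G.Active S (p :: w) → G.Active S w
  | _, [], _ => trivial
  | (_, _), (_, _) :: _, h => h.2

lemma step_proj (G : MixedGraph V) (π : V → I) (X : Set I) {a b : V} {e : EType}
    (hne : π a ≠ π b) (h : (G.mutil {v | π v ∈ X} ∅).step a e b) :
    ((G.quot π).mutil X ∅).step (π a) e (π b) := by
  cases e with
  | fwd =>
    obtain ⟨hd, hb, _⟩ := h
    exact ⟨⟨hne, a, b, rfl, rfl, hd⟩, hb, Set.notMem_empty _⟩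
  | bwd =>
    obtain ⟨hd, ha, _⟩ := h
    exact ⟨⟨hne.symm, b, a, rfl, rfl, hd⟩, ha, Set.notMem_empty _⟩
  | bidir =>
    obtain ⟨hd, ha, hb⟩ := h
    exact ⟨⟨hne, a, b, rfl, rfl, hd⟩, ha, hb⟩

lemma desc_proj (G : MixedGraph V) (π : V → I) (X : Set I) {b d : V}
    (h : (G.mutil {v | π v ∈ X} ∅).Desc b d) :
    ((G.quot π).mutil X ∅).Desc (π b) (π d) := by
  induction h with
  | refl => exact Relation.ReflTransGen.refl
  | @tail c d _ hcd ih =>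
    by_cases hpc : π d = π c
    · rwa [hpc]
    · obtain ⟨hdir, hd, _⟩ := hcd
      exact ih.tail ⟨⟨fun hh => hpc hh.symm, c, d, rfl, rfl, hdir⟩, hd, Set.notMem_empty _⟩

/-- Head-segment lemma: the activity condition at a merged interior vertex. -/
lemma seg_cond {M : MixedGraph V} {Mq : MixedGraph I} {π : V → I} {S : Set V} {T : Set I}
    (hdesc : ∀ b d, M.Desc b d → Mq.Desc (π b) (π d))
    (hS : ∀ v, v ∈ S ↔ π v ∈ T) :
    ∀ (w : List (EType × V)) (b : V) (e₁ : EType),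
      M.Active S ((e₁, b) :: w) →
      ∀ e₂ j rest, projw π (π b) w = (e₂, j) :: rest →
        (colliderAt e₁ e₂ ∧ ∃ d ∈ T, Mq.Desc (π b) d) ∨
        (¬ colliderAt e₁ e₂ ∧ π b ∉ T) := by
  intro w
  induction w with
  | nil => intro b e₁ _ e₂ j rest hproj; simp [projw] at hproj
  | cons p w' ih =>
    obtain ⟨e, c⟩ := p
    intro b e₁ hact e₂ j rest hproj
    have hcond := hact.1
    have htail : M.Active S ((e, c) :: w') := hact.2
    by_cases hcb : π c = π b
    · rw [projw, if_pos hcb] at hproj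
      have IH := ih c e htail e₂ j rest (by rw [hcb]; exact hproj)
      by_cases hL1 : (e₁ = EType.fwd ∨ e₁ = EType.bidir)
      · by_cases hR2 : (e₂ = EType.bwd ∨ e₂ = EType.bidir)
        · left
          refine ⟨⟨hL1, hR2⟩, ?_⟩
          by_cases hLe : (e = EType.fwd ∨ e = EType.bidir)
          · rcases IH with ⟨_, d, hdT, hD⟩ | ⟨hnc, _⟩
            · exact ⟨d, hdT, hcb ▸ hD⟩
            · exact absurd ⟨hLe, hR2⟩ hnc
          · have hRe : e = EType.bwd ∨ e = EType.bidir := by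
              cases e with
              | fwd => exact absurd (Or.inl rfl) hLe
              | bwd => exact Or.inl rfl
              | bidir => exact Or.inr rfl
            rcases hcond with ⟨_, d, hdS, hDd⟩ | ⟨hnc, _⟩
            · exact ⟨π d, (hS d).1 hdS, hdesc _ _ hDd⟩
            · exact absurd ⟨hL1, hRe⟩ hnc
        · right
          refine ⟨fun hc => hR2 hc.2, ?_⟩
          rcases IH with ⟨⟨_, hR2'⟩, _⟩ | ⟨_, hcT⟩
          · exact absurd hR2' hR2
          · exact hcb ▸ hcT
      · right
        refine ⟨fun hc => hL1 hc.1, ?_⟩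
        rcases hcond with ⟨⟨hL1', _⟩, _⟩ | ⟨_, hbS⟩
        · exact absurd hL1' hL1
        · exact fun hT => hbS ((hS b).2 hT)
    · rw [projw, if_neg hcb] at hproj
      obtain ⟨he, -⟩ : (e, π c) = (e₂, j) ∧ projw π (π c) w' = rest :=
        by exact ⟨(List.cons.injEq _ _ _ _ ▸ hproj).1, (List.cons.injEq _ _ _ _ ▸ hproj).2⟩
      obtain ⟨he2, -⟩ := Prod.mk.injEq _ _ _ _ ▸ he
      subst he2
      rcases hcond with ⟨hc, d, hdS, hDd⟩ | ⟨hnc, hbS⟩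
      · exact Or.inl ⟨hc, π d, (hS d).1 hdS, hdesc _ _ hDd⟩
      · exact Or.inr ⟨hnc, fun hT => hbS ((hS b).2 hT)⟩

/-- Main projection lemma: an active walk projects to an active walk. -/
lemma projw_sound {M : MixedGraph V} {Mq : MixedGraph I} {π : V → I} {S : Set V} {T : Set I}
    (hstep : ∀ a e b, π a ≠ π b → M.step a e b → Mq.step (π a) e (π b))
    (hdesc : ∀ b d, M.Desc b d → Mq.Desc (π b) (π d))
    (hS : ∀ v, v ∈ S ↔ π v ∈ T) :
    ∀ (w : List (EType × V)) (a : V), M.IsWalk a w → M.Active S w →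
      Mq.IsWalk (π a) (projw π (π a) w) ∧
      walkEnd (π a) (projw π (π a) w) = π (walkEnd a w) ∧
      Mq.Active T (projw π (π a) w) := by
  intro w
  induction w with
  | nil => intro a _ _; exact ⟨trivial, rfl, trivial⟩
  | cons p w' ih =>
    obtain ⟨e, c⟩ := p
    intro a hwalk hact
    have IH := ih c hwalk.2 (active_tail hact)
    by_cases hca : π c = π a
    · rw [projw, if_pos hca]
      rw [← hca]
      exact IH
    · rw [projw, if_neg hca]
      refine ⟨⟨hstep a e c (fun h => hca h.symm) hwalk.1, IH.1⟩, IH.2.1, ?_⟩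
      rcases hL : projw π (π c) w' with _ | ⟨⟨e₂, j⟩, rest⟩
      · trivial
      · refine ⟨?_, hL ▸ IH.2.2⟩
        exact seg_cond hdesc hS w' c e hact e₂ j rest hL

end MixedGraph

open MixedGraph in
/-- Rule 1 of do-calculus at the cluster level: if Rule 1 of
do-calculus holds in `G` for the family `Pdo` of interventional distributions
(conditional equalities stated in cross-multiplied form), then Rule 1 holds at
the cluster level: a d-separation `(Y ⊥ Z | X ∪ W)` in the mutilated C-DAG
with edges into `X` removed yields `P(y | do(x), z, w) = P(y | do(x), w)`. -/
theorem stmt12 {V I : Type} [Fintype V] [Fintype I]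
    {val : V → Type} [∀ i, Fintype (val i)]
    (G : MixedGraph V) (hG : G.Acyclic)
    (π : V → I) (hsurj : Function.Surjective π) (hq : (G.quot π).Acyclic)
    -- `Pdo X v` = joint post-intervention density of v under do(X = v|_X)
    (Pdo : Set V → (∀ i, val i) → ℝ)
    -- Rule 1 of do-calculus holds in G:
    (hrule1 : ∀ Xv Yv Zv Wv : Set V, PairwiseDisj4 Xv Yv Zv Wv →
      (G.mutil Xv ∅).DSep (Xv ∪ Wv) Yv Zv →
      ∀ v : ∀ i, val i,
        marg (Pdo Xv) (Xv ∪ Yv ∪ Zv ∪ Wv) v * marg (Pdo Xv) (Xv ∪ Wv) v =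
        marg (Pdo Xv) (Xv ∪ Yv ∪ Wv) v * marg (Pdo Xv) (Xv ∪ Zv ∪ Wv) v) :
    -- Rule 1 holds at the cluster level:
    ∀ X Y Z W : Set I, PairwiseDisj4 X Y Z W →
      ((G.quot π).mutil X ∅).DSep (X ∪ W) Y Z →
      ∀ v : ∀ i, val i,
        marg (Pdo {i | π i ∈ X}) {i | π i ∈ X ∪ Y ∪ Z ∪ W} v *
          marg (Pdo {i | π i ∈ X}) {i | π i ∈ X ∪ W} v =
        marg (Pdo {i | π i ∈ X}) {i | π i ∈ X ∪ Y ∪ W} v *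
          marg (Pdo {i | π i ∈ X}) {i | π i ∈ X ∪ Z ∪ W} v := by
  intro X Y Z W hd hdsep v
  have pre : ∀ {A B : Set I}, Disjoint A B →
      Disjoint {i : V | π i ∈ A} {i | π i ∈ B} := fun h =>
    Set.disjoint_left.mpr fun _ ha hb => Set.disjoint_left.mp h ha hb
  obtain ⟨h1, h2, h3, h4, h5, h6⟩ := hd
  have hdisj : PairwiseDisj4 {i : V | π i ∈ X} {i | π i ∈ Y} {i | π i ∈ Z} {i | π i ∈ W} :=
    ⟨pre h1, pre h2, pre h3, pre h4, pre h5, pre h6⟩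
  have hS : ∀ u : V, u ∈ ({i | π i ∈ X} ∪ {i | π i ∈ W} : Set V) ↔ π u ∈ X ∪ W := by
    intro u; simp [Set.mem_union]
  have hsep : (G.mutil {i | π i ∈ X} ∅).DSep ({i | π i ∈ X} ∪ {i | π i ∈ W})
      {i | π i ∈ Y} {i | π i ∈ Z} := by
    rintro ⟨x, hx, w, hwne, hwalk, hend, hact⟩
    obtain ⟨hW, hE, hA⟩ := projw_sound
      (fun a e b hne h => step_proj G π X hne h)
      (fun b d h => desc_proj G π X h) hS w x hwalk hact
    rcases hproj : projw π (π x) w with _ | ⟨p, l⟩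
    · have : π (walkEnd x w) = π x := by rw [← hE, hproj]; rfl
      exact Set.disjoint_left.mp h4 hx (this ▸ hend)
    · exact hdsep ⟨π x, hx, p :: l, by simp, hproj ▸ hW,
        by rw [← hproj, hE]; exact hend, hproj ▸ hA⟩
  have key := hrule1 {i | π i ∈ X} {i | π i ∈ Y} {i | π i ∈ Z} {i | π i ∈ W} hdisj hsep v
  have e1 : ({i : V | π i ∈ X} ∪ {i | π i ∈ Y} ∪ {i | π i ∈ Z} ∪ {i | π i ∈ W})
      = {i : V | π i ∈ X ∪ Y ∪ Z ∪ W} := by ext i; simp [Set.mem_union]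
  have e2 : ({i : V | π i ∈ X} ∪ {i | π i ∈ W}) = {i : V | π i ∈ X ∪ W} := by
    ext i; simp [Set.mem_union]
  have e3 : ({i : V | π i ∈ X} ∪ {i | π i ∈ Y} ∪ {i | π i ∈ W})
      = {i : V | π i ∈ X ∪ Y ∪ W} := by ext i; simp [Set.mem_union]
  have e4 : ({i : V | π i ∈ X} ∪ {i | π i ∈ Z} ∪ {i | π i ∈ W})
      = {i : V | π i ∈ X ∪ Z ∪ W} := by ext i; simp [Set.mem_union]
  rw [e1, e2, e3, e4] at key
  exact key
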